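/- Let K be an infinite field and L/K a finite Galois extension. For any finite-dimensional commutative K-algebra M, the Galois cohomology group H¹(Gal(L/K), (L ⊗_K M)^×) vanishes. -/

import Mathlib

open TensorProduct

/-- The action of `σ ∈ Gal(L/K)` on the unit group of `L ⊗_K M`, through the first
factor. -/
noncomputable def galUnitsAction (K L M : Type*) [Field K] [Field L] [Algebra K L]
    [CommRing M] [Algebra K M] (σ : L ≃ₐ[K] L) :
    (L ⊗[K] M)ˣ →* (L ⊗[K] M)ˣ :=
  Units.map (Algebra.TensorProduct.congr σ (AlgEquiv.refl (R := K) (A₁ := M))).toAlgHom.toRingHom.toMonoidHom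

/-!
For a cocycle `c`, the twisted sum `F x = ∑ σ, c σ * σ x` satisfies
`τ (F x) = (c τ)⁻¹ * F x`, so any `x` for which `F x` is a unit yields the coboundary `b = F x`;
the point is to find one.
After base change to `L`, the algebra `L ⊗ (L ⊗ M)` splits as `∏_τ L ⊗ M` (by Dedekind's
independence of characters), and there `F` visibly takes a unit value. The norm of `F x` is a
polynomial in the coordinates of `x` with coefficients in `K`; being nonzero at an `L`-point, it
is a nonzero polynomial, hence nonzero at some `K`-point because `K` is infinite.
-/

theorem Algebra.isUnit_det_leftMulMatrix_iff {R S ι : Type*} [CommRing R] [CommRing S]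
    [Algebra R S] [Fintype ι] [DecidableEq ι] (b : Module.Basis ι R S) {a : S} :
    IsUnit (Algebra.leftMulMatrix b a).det ↔ IsUnit a := by
  rw [← Matrix.isUnit_iff_isUnit_det, Algebra.leftMulMatrix_apply, LinearMap.isUnit_toMatrix_iff]
  refine ⟨fun h => ?_, fun h => h.map (Algebra.lmul R S)⟩
  obtain ⟨x, hx⟩ := (Module.End.isUnit_iff _ |>.1 h).2 1
  exact .of_mul_eq_one x hx

section Density

variable {K V A ι κ : Type*} [Field K] [AddCommGroup V] [Module K V] [CommRing A] [Algebra K A]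
  [Fintype ι] [Fintype κ] [DecidableEq κ]

noncomputable def genericLeftMulMatrix (b : Module.Basis ι K V) (b' : Module.Basis κ K A)
    (F : V →ₗ[K] A) : Matrix κ κ (MvPolynomial ι K) :=
  ∑ i, (MvPolynomial.X i : MvPolynomial ι K) •
    (Algebra.leftMulMatrix b' (F (b i))).map MvPolynomial.C

lemma aeval_det_genericLeftMulMatrix (b : Module.Basis ι K V) (b' : Module.Basis κ K A)
    (F : V →ₗ[K] A) (S : Type*) [CommRing S] [Algebra K S] (s : ι → S) :
    MvPolynomial.aeval s (genericLeftMulMatrix b b' F).det =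
      (Algebra.leftMulMatrix (Algebra.TensorProduct.basis S b')
        (F.baseChange S (∑ i, s i • (1 ⊗ₜ b i)))).det := by
  rw [AlgHom.map_det]
  congr 1
  simp only [genericLeftMulMatrix, map_sum, map_smul, LinearMap.baseChange_tmul]
  refine Finset.sum_congr rfl fun i _ => ?_
  rw [Algebra.leftMulMatrix_apply (Algebra.TensorProduct.basis S b'), ← Algebra.baseChange_lmul,
    LinearMap.toMatrix_baseChange, ← Algebra.leftMulMatrix_apply]
  ext
  simp

theorem exists_isUnit_apply_of_isUnit_baseChange [Infinite K] [FiniteDimensional K V]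
    [FiniteDimensional K A] (S : Type*) [CommRing S] [Nontrivial S] [Algebra K S]
    (F : V →ₗ[K] A) {y : S ⊗[K] V} (hy : IsUnit (F.baseChange S y)) : ∃ x, IsUnit (F x) := by
  let b := Module.finBasis K V
  let b' := Module.finBasis K A
  have hP0 : (genericLeftMulMatrix b b' F).det ≠ 0 := by
    intro h
    have hy' : ∑ i, (Algebra.TensorProduct.basis S b).repr y i • (1 ⊗ₜ b i) = y := by
      simpa using (Algebra.TensorProduct.basis S b).sum_repr y
    have hnorm :=
      aeval_det_genericLeftMulMatrix b b' F S ((Algebra.TensorProduct.basis S b).repr y)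
    rw [h, map_zero, hy'] at hnorm
    exact not_isUnit_zero (hnorm ▸ (Algebra.isUnit_det_leftMulMatrix_iff _).2 hy)
  obtain ⟨r, hr⟩ : ∃ r, MvPolynomial.eval r (genericLeftMulMatrix b b' F).det ≠ 0 := by
    by_contra! h
    exact hP0 (MvPolynomial.funext fun r => by simp [h r])
  refine ⟨∑ i, r i • b i, ?_⟩
  rw [← MvPolynomial.coe_aeval_eq_eval, RingHom.coe_coe, aeval_det_genericLeftMulMatrix] at hr
  simpa using ((Algebra.isUnit_det_leftMulMatrix_iff _).1 hr.isUnit).map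
    (Algebra.TensorProduct.lid K A)

end Density

theorem span_range_galois_orbit_eq_top (K L : Type*) [Field K] [Field L] [Algebra K L]
    [FiniteDimensional K L] :
    Submodule.span L (Set.range fun (ℓ : L) (τ : L ≃ₐ[K] L) => τ ℓ) = ⊤ := by
  classical
  by_contra h
  obtain ⟨f, hf0, hle⟩ := Submodule.exists_le_ker_of_lt_top _ (lt_top_iff_ne_top.2 h)
  have hf (τ : L ≃ₐ[K] L) (a : L) : f (Pi.single τ a) = a * f (Pi.single τ 1) := by
    rw [← smul_eq_mul, ← map_smul, ← Pi.single_smul, smul_eq_mul, mul_one]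
  have hdedekind := Fintype.linearIndependent_iff.1
    ((linearIndependent_algHom_toLinearMap K L L).comp (AlgEquiv.toAlgHom : (L ≃ₐ[K] L) → _)
      fun _ _ h => AlgEquiv.ext (AlgHom.ext_iff.1 h))
    (fun τ => f (Pi.single τ 1)) (LinearMap.ext fun ℓ => ?_)
  · exact hf0 (LinearMap.pi_ext fun τ a => by rw [hf, hdedekind, mul_zero, LinearMap.zero_apply])
  · have horbit : f (fun τ => τ ℓ) = 0 := hle (Submodule.subset_span ⟨ℓ, rfl⟩)
    rw [← Finset.univ_sum_single (fun τ : L ≃ₐ[K] L => τ ℓ), map_sum] at horbit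
    simp only [LinearMap.sum_apply, LinearMap.smul_apply, Function.comp_apply,
      AlgHom.toLinearMap_apply, AlgEquiv.coe_toAlgHom, smul_eq_mul, LinearMap.zero_apply]
    rw [← horbit]
    exact Finset.sum_congr rfl fun τ _ => by rw [hf τ (τ ℓ), mul_comm]

section GaloisTensor

variable (K L M : Type*) [Field K] [Field L] [Algebra K L] [CommRing M] [Algebra K M]

noncomputable def galTensorAction : (L ≃ₐ[K] L) →* (L ⊗[K] M ≃ₐ[K] L ⊗[K] M) where
  toFun σ := Algebra.TensorProduct.congr σ AlgEquiv.refl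
  map_one' := Algebra.TensorProduct.congr_refl
  map_mul' σ τ := Algebra.TensorProduct.congr_trans τ σ AlgEquiv.refl AlgEquiv.refl

noncomputable def galSplitting (τ : L ≃ₐ[K] L) : L ⊗[K] (L ⊗[K] M) →ₐ[L] L ⊗[K] M :=
  Algebra.TensorProduct.lift (Algebra.ofId L _) (galTensorAction K L M τ).toAlgHom
    fun _ _ => .all _ _

variable {K L M}

@[simp]
lemma galTensorAction_tmul (σ : L ≃ₐ[K] L) (ℓ : L) (m : M) :
    galTensorAction K L M σ (ℓ ⊗ₜ m) = σ ℓ ⊗ₜ m :=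
  rfl

@[simp]
lemma galSplitting_tmul (τ : L ≃ₐ[K] L) (ℓ : L) (a : L ⊗[K] M) :
    galSplitting K L M τ (ℓ ⊗ₜ a) = ℓ • galTensorAction K L M τ a := by
  simp [galSplitting, Algebra.smul_def]

lemma galSplitting_baseChange_mk (τ : L ≃ₐ[K] L) (ℓ : L) (a : L ⊗[K] M) :
    galSplitting K L M τ ((TensorProduct.mk K L M ℓ).baseChange L a) = τ ℓ • a := by
  induction a with
  | zero => simp
  | tmul ℓ' m => simp [smul_tmul', mul_comm]
  | add a a' ha ha' => simp [ha, ha']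

variable (K L M) in
noncomputable def galSplittingPi : L ⊗[K] (L ⊗[K] M) →ₐ[L] (L ≃ₐ[K] L) → L ⊗[K] M :=
  AlgHom.pi (galSplitting K L M)

lemma galSplittingPi_surjective [FiniteDimensional K L] :
    Function.Surjective (galSplittingPi K L M) := by
  classical
  have hsingle (τ : L ≃ₐ[K] L) (a : L ⊗[K] M) :
      Pi.single τ a ∈ LinearMap.range (galSplittingPi K L M).toLinearMap := by
    let smulRight : ((L ≃ₐ[K] L) → L) →ₗ[L] (L ≃ₐ[K] L) → L ⊗[K] M :=
      LinearMap.pi fun σ => LinearMap.toSpanSingleton L _ a ∘ₗ LinearMap.proj σ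
    have hspan : Submodule.span L (Set.range fun (ℓ : L) (σ : L ≃ₐ[K] L) => σ ℓ) ≤
        (LinearMap.range (galSplittingPi K L M).toLinearMap).comap smulRight := by
      rw [Submodule.span_le]
      rintro _ ⟨ℓ, rfl⟩
      exact ⟨(TensorProduct.mk K L M ℓ).baseChange L a,
        funext fun σ => galSplitting_baseChange_mk σ ℓ a⟩
    rw [span_range_galois_orbit_eq_top] at hspan
    obtain ⟨x, hx⟩ := hspan (Submodule.mem_top (x := Pi.single τ 1))
    refine ⟨x, hx.trans (funext fun σ => ?_)⟩
    by_cases h : σ = τ <;> simp [smulRight, h]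
  intro y
  rw [← Finset.univ_sum_single y]
  obtain ⟨x, hx⟩ := Submodule.sum_mem _ fun τ _ => hsingle τ (y τ)
  exact ⟨x, hx⟩

lemma galSplittingPi_bijective [FiniteDimensional K L] [IsGalois K L] [FiniteDimensional K M] :
    Function.Bijective (galSplittingPi K L M) := by
  refine ⟨?_, galSplittingPi_surjective⟩
  have hdim : Module.finrank L (L ⊗[K] (L ⊗[K] M)) =
      Module.finrank L ((L ≃ₐ[K] L) → L ⊗[K] M) := by
    rw [Module.finrank_baseChange, Module.finrank_pi_fintype, Finset.sum_const, Finset.card_univ,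
      Fintype.card_eq_nat_card, IsGalois.card_aut_eq_finrank, Module.finrank_baseChange,
      Module.finrank_tensorProduct, smul_eq_mul]
  exact (LinearMap.injective_iff_surjective_of_finrank_eq_finrank hdim
    (f := (galSplittingPi K L M).toLinearMap)).2 galSplittingPi_surjective

lemma isUnit_of_forall_isUnit_galSplitting [FiniteDimensional K L] [IsGalois K L]
    [FiniteDimensional K M] {z : L ⊗[K] (L ⊗[K] M)} (h : ∀ τ, IsUnit (galSplitting K L M τ z)) :
    IsUnit z := by
  rw [← isUnit_map_iff
    (AlgEquiv.ofBijective _ (galSplittingPi_bijective (K := K) (L := L) (M := M)))]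
  exact Pi.isUnit_iff.2 h

lemma coe_galUnitsAction (σ : L ≃ₐ[K] L) (u : (L ⊗[K] M)ˣ) :
    (galUnitsAction K L M σ u : L ⊗[K] M) = galTensorAction K L M σ u :=
  rfl

variable [FiniteDimensional K L] (c : (L ≃ₐ[K] L) → (L ⊗[K] M)ˣ)

noncomputable def twistedSum : L ⊗[K] M →ₗ[K] L ⊗[K] M :=
  ∑ σ, LinearMap.mulLeft K (c σ : L ⊗[K] M) ∘ₗ (galTensorAction K L M σ).toLinearMap

lemma twistedSum_apply (x : L ⊗[K] M) :
    twistedSum c x = ∑ σ, (c σ : L ⊗[K] M) * galTensorAction K L M σ x := by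
  simp [twistedSum]

lemma galTensorAction_twistedSum
    (hc : ∀ σ τ, c (σ * τ) = c σ * galUnitsAction K L M σ (c τ)) (τ : L ≃ₐ[K] L)
    (x : L ⊗[K] M) :
    galTensorAction K L M τ (twistedSum c x) = ↑(c τ)⁻¹ * twistedSum c x := by
  have hc' (σ : L ≃ₐ[K] L) : galTensorAction K L M τ (c σ) = ↑(c τ)⁻¹ * c (τ * σ) := by
    rw [hc, Units.val_mul, coe_galUnitsAction, Units.inv_mul_cancel_left]
  rw [twistedSum_apply, map_sum, Finset.mul_sum]
  refine Fintype.sum_equiv (Equiv.mulLeft τ) _ _ fun σ => ?_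
  rw [map_mul, hc', mul_assoc, ← AlgEquiv.mul_apply, ← map_mul, Equiv.coe_mulLeft]

lemma galSplitting_baseChange_twistedSum (τ : L ≃ₐ[K] L) (z : L ⊗[K] (L ⊗[K] M)) :
    galSplitting K L M τ ((twistedSum c).baseChange L z) =
      ∑ σ, galTensorAction K L M τ (c σ) * galSplitting K L M (τ * σ) z := by
  induction z with
  | zero => simp
  | tmul ℓ a => simp [twistedSum_apply, Finset.smul_sum]
  | add z z' hz hz' => simp [hz, hz', mul_add, Finset.sum_add_distrib]

lemma exists_isUnit_twistedSum_baseChange [IsGalois K L] [FiniteDimensional K M] :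
    ∃ z, IsUnit ((twistedSum c).baseChange L z) := by
  classical
  obtain ⟨z, hz⟩ := galSplittingPi_surjective (K := K) (L := L) (M := M) (Pi.single 1 1)
  refine ⟨z, isUnit_of_forall_isUnit_galSplitting fun τ => ?_⟩
  have hz' (ρ : L ≃ₐ[K] L) : galSplitting K L M ρ z =
      (Pi.single 1 1 : (L ≃ₐ[K] L) → L ⊗[K] M) ρ :=
    congr_fun hz ρ
  rw [galSplitting_baseChange_twistedSum, Fintype.sum_eq_single τ⁻¹ fun σ hσ => by
    rw [hz', Pi.single_eq_of_ne (by rwa [Ne, mul_eq_one_iff_inv_eq, eq_comm]), mul_zero]]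
  rw [hz', mul_inv_cancel, Pi.single_eq_same, mul_one]
  exact (c τ⁻¹).isUnit.map _

end GaloisTensor

/-- let `K` be an infinite field, `L/K` a finite Galois extension, and `M`
a finite-dimensional commutative `K`-algebra.  Then
`H¹(Gal(L/K), (L ⊗_K M)^×) = 0`: every 1-cocycle is a coboundary. -/
theorem statement_16 (K L M : Type*) [Field K] [Infinite K] [Field L] [Algebra K L]
    [FiniteDimensional K L] [IsGalois K L]
    [CommRing M] [Algebra K M] [FiniteDimensional K M]
    (c : (L ≃ₐ[K] L) → (L ⊗[K] M)ˣ)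
    (hc : ∀ σ τ : L ≃ₐ[K] L, c (σ * τ) = c σ * galUnitsAction K L M σ (c τ)) :
    ∃ b : (L ⊗[K] M)ˣ, ∀ σ : L ≃ₐ[K] L, c σ = b * (galUnitsAction K L M σ b)⁻¹ := by
  obtain ⟨z, hz⟩ := exists_isUnit_twistedSum_baseChange c
  obtain ⟨x, hx⟩ := exists_isUnit_apply_of_isUnit_baseChange L (twistedSum c) hz
  refine ⟨hx.unit, fun σ => ?_⟩
  have hb : galUnitsAction K L M σ hx.unit = (c σ)⁻¹ * hx.unit :=
    Units.ext (galTensorAction_twistedSum c hc σ x)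
  rw [hb, mul_inv_rev, inv_inv, mul_inv_cancel_left]
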